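/- Let I be an ideal on ω and f a continuous linear functional on ℓ∞. Then f is a difference g − h of two S_I-limits g, h ∈ SL(I) if and only if f(e) = 0, ‖f‖ ≤ 2, and f(𝟙_A) = 0 for all A ∈ I. -/

import Mathlib

open Filter Topology

noncomputable section

abbrev LInf : Type := lp (fun _ : ℕ => ℝ) (⊤ : ENNReal)

def indic (A : Set ℕ) : LInf :=
  ⟨A.indicator (fun _ => (1:ℝ)), memℓp_infty ⟨1, by
    rintro r ⟨n, rfl⟩
    by_cases h : n ∈ A <;> simp [Set.indicator, h]⟩⟩

def IsIdealOmega (I : Set (Set ℕ)) : Prop :=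
  (∀ A B : Set ℕ, A ∈ I → B ⊆ A → B ∈ I) ∧
  (∀ A B : Set ℕ, A ∈ I → B ∈ I → A ∪ B ∈ I) ∧
  (Set.univ : Set ℕ) ∉ I ∧
  (∀ A : Set ℕ, A.Finite → A ∈ I)

def SLI (I : Set (Set ℕ)) : Set (LInf →L[ℝ] ℝ) :=
  {f | (∀ x : LInf, (∀ n, 0 ≤ x n) → 0 ≤ f x) ∧
       (∀ (x : LInf) (a : ℝ), Tendsto (fun n => x n) atTop (𝓝 a) → f x = a) ∧
       (∀ A ∈ I, f (indic A) = 0)}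

def UltI (I : Set (Set ℕ)) : Set (Ultrafilter ℕ) :=
  {F | (↑F : Filter ℕ) ≤ cofinite ∧ ∀ A ∈ I, Aᶜ ∈ F}

def IClusterPoint (I : Set (Set ℕ)) (x : ℕ → ℝ) (η : ℝ) : Prop :=
  ∀ ε > 0, {n | |x n - η| ≤ ε} ∉ I

def IConv (I : Set (Set ℕ)) (x : ℕ → ℝ) (η : ℝ) : Prop :=
  ∀ ε > 0, {n | ε ≤ |x n - η|} ∈ I

def eone : LInf := indic Set.univ


namespace Aux

lemma abs_apply_le (x : LInf) (n : ℕ) : |x n| ≤ ‖x‖ :=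
  lp.norm_apply_le_norm ENNReal.top_ne_zero x n

lemma norm_le (x : LInf) {C : ℝ} (hC : 0 ≤ C) (h : ∀ n, |x n| ≤ C) : ‖x‖ ≤ C :=
  lp.norm_le_of_forall_le hC h

def mkB (u : ℕ → ℝ) (C : ℝ) (h : ∀ n, |u n| ≤ C) : LInf :=
  ⟨u, memℓp_infty ⟨C, by rintro r ⟨n, rfl⟩; exact h n⟩⟩

@[simp] lemma mkB_apply (u : ℕ → ℝ) (C : ℝ) (h : ∀ n, |u n| ≤ C) (n : ℕ) :
    mkB u C h n = u n := rfl

lemma indic_apply (A : Set ℕ) (n : ℕ) :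
    indic A n = A.indicator (fun _ => (1:ℝ)) n := rfl

lemma indic_apply_mem {A : Set ℕ} {n : ℕ} (h : n ∈ A) : indic A n = 1 := by
  simp [indic_apply, Set.indicator_of_mem h]

lemma indic_apply_not_mem {A : Set ℕ} {n : ℕ} (h : n ∉ A) : indic A n = 0 := by
  simp [indic_apply, Set.indicator_of_notMem h]

lemma indic_nonneg (A : Set ℕ) (n : ℕ) : 0 ≤ indic A n := by
  rw [indic_apply]; by_cases h : n ∈ A <;> simp [h]

lemma indic_le_one (A : Set ℕ) (n : ℕ) : indic A n ≤ 1 := by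
  rw [indic_apply]; by_cases h : n ∈ A <;> simp [h]

end Aux

namespace Aux

variable (F : Ultrafilter ℕ)

lemma exists_flim (x : LInf) : ∃ a : ℝ, Tendsto (fun n => x n) (↑F) (𝓝 a) := by
  have hK : IsCompact (Set.Icc (-‖x‖) ‖x‖) := isCompact_Icc
  have hle : ↑(F.map (fun n => x n)) ≤ 𝓟 (Set.Icc (-‖x‖) ‖x‖) := by
    rw [Ultrafilter.coe_map]
    refine Filter.le_principal_iff.mpr ?_
    refine Filter.mem_map.mpr (Filter.univ_mem' fun n => ?_)
    have := abs_apply_le x n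
    exact ⟨neg_le_of_abs_le this, le_of_abs_le this⟩
  obtain ⟨a, _, ha⟩ := hK.ultrafilter_le_nhds _ hle
  exact ⟨a, ha⟩

def flim (x : LInf) : ℝ := (exists_flim F x).choose

lemma flim_tendsto (x : LInf) : Tendsto (fun n => x n) (↑F) (𝓝 (flim F x)) :=
  (exists_flim F x).choose_spec

lemma flim_eq {x : LInf} {a : ℝ} (h : Tendsto (fun n => x n) (↑F) (𝓝 a)) :
    flim F x = a := tendsto_nhds_unique (flim_tendsto F x) h

lemma flim_add (x y : LInf) : flim F (x + y) = flim F x + flim F y := by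
  refine flim_eq F ?_
  have : Tendsto (fun n => x n + y n) (↑F) (𝓝 (flim F x + flim F y)) :=
    (flim_tendsto F x).add (flim_tendsto F y)
  refine this.congr fun n => ?_
  simp [lp.coeFn_add]

lemma flim_smul (c : ℝ) (x : LInf) : flim F (c • x) = c * flim F x := by
  refine flim_eq F ?_
  have : Tendsto (fun n => c * x n) (↑F) (𝓝 (c * flim F x)) :=
    (flim_tendsto F x).const_mul c
  refine this.congr fun n => ?_
  simp [lp.coeFn_smul]

def Lfun : LInf →L[ℝ] ℝ :=
  LinearMap.mkContinuous
    { toFun := flim F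
      map_add' := flim_add F
      map_smul' := flim_smul F } 1
    (by
      intro x
      simp only [LinearMap.coe_mk, AddHom.coe_mk, one_mul]
      have h1 : |flim F x| ≤ ‖x‖ := by
        refine abs_le.mpr ⟨?_, ?_⟩
        · exact ge_of_tendsto (flim_tendsto F x) (Filter.univ_mem' fun n =>
            neg_le_of_abs_le (abs_apply_le x n))
        · exact le_of_tendsto (flim_tendsto F x) (Filter.univ_mem' fun n =>
            le_of_abs_le (abs_apply_le x n))
      exact h1)

lemma Lfun_apply (x : LInf) : Lfun F x = flim F x := rfl

end Aux

namespace Aux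

variable {I : Set (Set ℕ)} (hI : IsIdealOmega I)

def idealFilter (I : Set (Set ℕ)) (hI : IsIdealOmega I) : Filter ℕ where
  sets := {S | ∃ A ∈ I, Aᶜ ⊆ S}
  univ_sets := ⟨∅, hI.2.2.2 ∅ Set.finite_empty, by simp⟩
  sets_of_superset := by
    rintro S T ⟨A, hA, hAS⟩ hST
    exact ⟨A, hA, hAS.trans hST⟩
  inter_sets := by
    rintro S T ⟨A, hA, hAS⟩ ⟨B, hB, hBT⟩
    refine ⟨A ∪ B, hI.2.1 A B hA hB, ?_⟩
    rw [Set.compl_union]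
    exact Set.subset_inter (fun n hn => hAS hn.1) (fun n hn => hBT hn.2)

lemma idealFilter_neBot : (idealFilter I hI).NeBot := by
  rw [← Filter.forall_mem_nonempty_iff_neBot]
  rintro S ⟨A, hA, hAS⟩
  have : Aᶜ.Nonempty := by
    rw [Set.nonempty_compl]
    rintro rfl
    exact hI.2.2.1 hA
  exact this.mono hAS

def idealUlt : Ultrafilter ℕ :=
  @Ultrafilter.of ℕ (idealFilter I hI) (idealFilter_neBot hI)

lemma idealUlt_le : ↑(idealUlt hI) ≤ idealFilter I hI :=
  @Ultrafilter.of_le ℕ (idealFilter I hI) (idealFilter_neBot hI)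

lemma compl_mem_idealUlt {A : Set ℕ} (hA : A ∈ I) : Aᶜ ∈ idealUlt hI :=
  idealUlt_le hI ⟨A, hA, le_refl _⟩

lemma idealUlt_le_atTop : ↑(idealUlt hI) ≤ (atTop : Filter ℕ) := by
  rw [← Nat.cofinite_eq_atTop]
  refine (idealUlt_le hI).trans ?_
  intro S hS
  exact ⟨Sᶜ, hI.2.2.2 _ hS, by simp⟩

theorem Lfun_mem :
    (∀ x : LInf, (∀ n, 0 ≤ x n) → 0 ≤ Lfun (idealUlt hI) x) ∧
    (∀ (x : LInf) (a : ℝ), Tendsto (fun n => x n) atTop (𝓝 a) → Lfun (idealUlt hI) x = a) ∧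
    (∀ A ∈ I, Lfun (idealUlt hI) (indic A) = 0) := by
  refine ⟨?_, ?_, ?_⟩
  · intro x hx
    exact ge_of_tendsto (flim_tendsto _ x) (Filter.univ_mem' hx)
  · intro x a ha
    exact flim_eq _ (ha.mono_left (idealUlt_le_atTop hI))
  · intro A hA
    refine flim_eq _ ?_
    have h0 : Tendsto (fun _ : ℕ => (0:ℝ)) (↑(idealUlt hI)) (𝓝 0) := tendsto_const_nhds
    refine h0.congr' ?_
    filter_upwards [compl_mem_idealUlt hI hA] with n hn
    exact (indic_apply_not_mem hn).symm

end Aux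

namespace Aux

variable (f : LInf →L[ℝ] ℝ)

def adm (x : LInf) : Set LInf := {y | (∀ n, 0 ≤ y n) ∧ ∀ n, y n ≤ x n}

def q (x : LInf) : ℝ := sSup (f '' adm x)

lemma zero_mem_adm {x : LInf} (hx : ∀ n, 0 ≤ x n) : (0 : LInf) ∈ adm x := by
  constructor <;> intro n <;> simp only [lp.coeFn_zero, Pi.zero_apply]
  · exact le_refl 0
  · exact hx n

lemma adm_norm_le {x y : LInf} (hy : y ∈ adm x) : ‖y‖ ≤ ‖x‖ := by
  refine norm_le y (norm_nonneg x) fun n => ?_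
  rw [abs_of_nonneg (hy.1 n)]
  exact (hy.2 n).trans ((le_abs_self _).trans (abs_apply_le x n))

lemma q_bddAbove (x : LInf) : BddAbove (f '' adm x) := by
  refine ⟨‖f‖ * ‖x‖, ?_⟩
  rintro r ⟨y, hy, rfl⟩
  calc f y ≤ |f y| := le_abs_self _
    _ ≤ ‖f‖ * ‖y‖ := f.le_opNorm y
    _ ≤ ‖f‖ * ‖x‖ := by
        exact mul_le_mul_of_nonneg_left (adm_norm_le hy) (norm_nonneg f)

lemma q_nonempty {x : LInf} (hx : ∀ n, 0 ≤ x n) : (f '' adm x).Nonempty :=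
  ⟨f 0, 0, zero_mem_adm hx, rfl⟩

lemma le_q {x y : LInf} (hy : y ∈ adm x) : f y ≤ q f x :=
  le_csSup (q_bddAbove f x) ⟨y, hy, rfl⟩

lemma q_le {x : LInf} (hx : ∀ n, 0 ≤ x n) {c : ℝ} (hc : ∀ y ∈ adm x, f y ≤ c) :
    q f x ≤ c := csSup_le (q_nonempty f hx) (by rintro r ⟨y, hy, rfl⟩; exact hc y hy)

lemma q_nonneg {x : LInf} (hx : ∀ n, 0 ≤ x n) : 0 ≤ q f x := by
  have := le_q f (zero_mem_adm hx)
  simpa using this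

lemma f_le_q {x : LInf} (hx : ∀ n, 0 ≤ x n) : f x ≤ q f x :=
  le_q f ⟨hx, fun n => le_refl _⟩

lemma q_le_norm {x : LInf} (hx : ∀ n, 0 ≤ x n) : q f x ≤ ‖f‖ * ‖x‖ := by
  refine q_le f hx fun y hy => ?_
  calc f y ≤ |f y| := le_abs_self _
    _ ≤ ‖f‖ * ‖y‖ := f.le_opNorm y
    _ ≤ ‖f‖ * ‖x‖ := mul_le_mul_of_nonneg_left (adm_norm_le hy) (norm_nonneg f)

lemma q_add {u v : LInf} (hu : ∀ n, 0 ≤ u n) (hv : ∀ n, 0 ≤ v n) :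
    q f (u + v) = q f u + q f v := by
  have huv : ∀ n, 0 ≤ (u + v) n := by
    intro n; rw [lp.coeFn_add]; exact add_nonneg (hu n) (hv n)
  refine le_antisymm ?_ ?_
  · -- split y into min part and rest
    refine q_le f huv fun y hy => ?_
    set y₁ : LInf := mkB (fun n => min (y n) (u n)) ‖y‖ (fun n => by
      rw [abs_of_nonneg (le_min (hy.1 n) (hu n))]
      exact (min_le_left _ _).trans ((le_abs_self _).trans (abs_apply_le y n))) with hy₁def
    have h1 : y₁ ∈ adm u := ⟨fun n => le_min (hy.1 n) (hu n), fun n => min_le_right _ _⟩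
    have h2 : y - y₁ ∈ adm v := by
      constructor
      · intro n
        rw [lp.coeFn_sub, Pi.sub_apply]
        simp only [hy₁def, mkB_apply, sub_nonneg]
        exact min_le_left _ _
      · intro n
        rw [lp.coeFn_sub, Pi.sub_apply]
        simp only [hy₁def, mkB_apply]
        rcases le_total (y n) (u n) with h | h
        · rw [min_eq_left h]; simpa using hv n
        · rw [min_eq_right h]
          have := hy.2 n
          rw [lp.coeFn_add, Pi.add_apply] at this
          linarith
    have : f y = f y₁ + f (y - y₁) := by rw [map_sub]; ring
    rw [this]
    exact add_le_add (le_q f h1) (le_q f h2)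
  · rw [← sub_nonneg]
    have h1 : q f u ≤ q f (u + v) - q f v := by
      refine q_le f hu fun y₁ hy₁ => ?_
      rw [le_sub_iff_add_le, ← sub_nonneg, ← sub_sub]
      have h2 : q f v ≤ q f (u + v) - f y₁ := by
        refine q_le f hv fun y₂ hy₂ => ?_
        rw [le_sub_iff_add_le, add_comm, ← map_add]
        refine le_q f ⟨?_, ?_⟩
        · intro n
          rw [lp.coeFn_add, Pi.add_apply]
          exact add_nonneg (hy₁.1 n) (hy₂.1 n)
        · intro n
          rw [lp.coeFn_add, Pi.add_apply, lp.coeFn_add, Pi.add_apply]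
          exact add_le_add (hy₁.2 n) (hy₂.2 n)
      linarith
    linarith

lemma q_zero : q f 0 = 0 := by
  refine le_antisymm ?_ (q_nonneg f (fun n => by simp [lp.coeFn_zero]))
  refine q_le f (fun n => by simp [lp.coeFn_zero]) fun y hy => ?_
  have : y = 0 := by
    refine lp.ext (funext fun n => ?_)
    have h1 := hy.1 n
    have h2 := hy.2 n
    simp only [lp.coeFn_zero, Pi.zero_apply] at h2 ⊢
    linarith
  simp [this]

lemma q_smul {x : LInf} (hx : ∀ n, 0 ≤ x n) {r : ℝ} (hr : 0 ≤ r) :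
    q f (r • x) = r * q f x := by
  rcases eq_or_lt_of_le hr with rfl | hr
  · simp [q_zero f]
  have hrx : ∀ n, 0 ≤ (r • x) n := fun n => by
    rw [lp.coeFn_smul, Pi.smul_apply, smul_eq_mul]
    exact mul_nonneg hr.le (hx n)
  refine le_antisymm ?_ ?_
  · refine q_le f hrx fun y hy => ?_
    have h1 : r⁻¹ • y ∈ adm x := by
      constructor
      · intro n
        rw [lp.coeFn_smul, Pi.smul_apply, smul_eq_mul]
        exact mul_nonneg (inv_nonneg.mpr hr.le) (hy.1 n)
      · intro n
        rw [lp.coeFn_smul, Pi.smul_apply, smul_eq_mul]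
        rw [inv_mul_le_iff₀ hr]
        have := hy.2 n
        rwa [lp.coeFn_smul, Pi.smul_apply, smul_eq_mul] at this
    have : f y = r * f (r⁻¹ • y) := by
      rw [map_smul, smul_eq_mul, ← mul_assoc, mul_inv_cancel₀ hr.ne', one_mul]
    rw [this]
    exact mul_le_mul_of_nonneg_left (le_q f h1) hr.le
  · rw [mul_comm, ← le_div_iff₀ hr]
    refine q_le f hx fun y hy => ?_
    rw [le_div_iff₀ hr, mul_comm, ← smul_eq_mul, ← map_smul]
    refine le_q f ⟨?_, ?_⟩
    · intro n
      rw [lp.coeFn_smul, Pi.smul_apply, smul_eq_mul]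
      exact mul_nonneg hr.le (hy.1 n)
    · intro n
      rw [lp.coeFn_smul, Pi.smul_apply, smul_eq_mul, lp.coeFn_smul, Pi.smul_apply, smul_eq_mul]
      exact mul_le_mul_of_nonneg_left (hy.2 n) hr.le

end Aux

namespace Aux

def posP (x : LInf) : LInf := mkB (fun n => max (x n) 0) ‖x‖ (fun n => by
  rw [abs_of_nonneg (le_max_right _ _)]
  exact max_le ((le_abs_self _).trans (abs_apply_le x n)) (norm_nonneg x))

def negP (x : LInf) : LInf := mkB (fun n => max (-(x n)) 0) ‖x‖ (fun n => by
  rw [abs_of_nonneg (le_max_right _ _)]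
  exact max_le ((neg_le_abs _).trans (abs_apply_le x n)) (norm_nonneg x))

lemma posP_apply (x : LInf) (n : ℕ) : posP x n = max (x n) 0 := rfl
lemma negP_apply (x : LInf) (n : ℕ) : negP x n = max (-(x n)) 0 := rfl

lemma posP_nonneg (x : LInf) (n : ℕ) : 0 ≤ posP x n := le_max_right _ _
lemma negP_nonneg (x : LInf) (n : ℕ) : 0 ≤ negP x n := le_max_right _ _

lemma max_zero_eq (t : ℝ) : max t 0 = (t + |t|) / 2 := by
  rcases abs_cases t with ⟨h1, h2⟩ | ⟨h1, h2⟩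
  · rw [max_eq_left h2, h1]; ring
  · rw [max_eq_right h2.le, h1]; ring

lemma posP_sub_negP (x : LInf) : posP x - negP x = x := by
  refine lp.ext (funext fun n => ?_)
  rw [lp.coeFn_sub, Pi.sub_apply, posP_apply, negP_apply, max_zero_eq, max_zero_eq, abs_neg]
  ring

lemma posP_neg (x : LInf) : posP (-x) = negP x := by
  refine lp.ext (funext fun n => ?_)
  rw [posP_apply, negP_apply, lp.coeFn_neg, Pi.neg_apply]

lemma negP_neg (x : LInf) : negP (-x) = posP x := by
  refine lp.ext (funext fun n => ?_)
  rw [posP_apply, negP_apply, lp.coeFn_neg, Pi.neg_apply, neg_neg]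

lemma posP_smul (x : LInf) {r : ℝ} (hr : 0 ≤ r) : posP (r • x) = r • posP x := by
  refine lp.ext (funext fun n => ?_)
  rw [lp.coeFn_smul, Pi.smul_apply, posP_apply, posP_apply, lp.coeFn_smul, Pi.smul_apply,
    smul_eq_mul, smul_eq_mul, max_zero_eq, max_zero_eq, abs_mul, abs_of_nonneg hr]
  ring

lemma negP_smul (x : LInf) {r : ℝ} (hr : 0 ≤ r) : negP (r • x) = r • negP x := by
  refine lp.ext (funext fun n => ?_)
  rw [lp.coeFn_smul, Pi.smul_apply, negP_apply, negP_apply, lp.coeFn_smul, Pi.smul_apply,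
    smul_eq_mul, smul_eq_mul, max_zero_eq, max_zero_eq, ← neg_mul, abs_mul]
  simp only [abs_neg, abs_of_nonneg hr]
  ring

lemma posP_add_identity (x z : LInf) :
    posP (x + z) + negP x + negP z = posP x + posP z + negP (x + z) := by
  refine lp.ext (funext fun n => ?_)
  simp only [lp.coeFn_add, Pi.add_apply, posP_apply, negP_apply]
  rw [max_zero_eq, max_zero_eq, max_zero_eq, max_zero_eq, max_zero_eq, max_zero_eq,
    abs_neg, abs_neg, abs_neg]
  ring

variable (f : LInf →L[ℝ] ℝ)

lemma q_add3 {a b c : LInf} (ha : ∀ n, 0 ≤ a n) (hb : ∀ n, 0 ≤ b n) (hc : ∀ n, 0 ≤ c n) :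
    q f (a + b + c) = q f a + q f b + q f c := by
  have hab : ∀ n, 0 ≤ (a + b) n := fun n => by
    rw [lp.coeFn_add, Pi.add_apply]; exact add_nonneg (ha n) (hb n)
  rw [q_add f hab hc, q_add f ha hb]

def Fp (x : LInf) : ℝ := q f (posP x) - q f (negP x)

lemma Fp_add (x z : LInf) : Fp f (x + z) = Fp f x + Fp f z := by
  have key := congrArg (q f) (posP_add_identity x z)
  rw [q_add3 f (posP_nonneg _) (negP_nonneg _) (negP_nonneg _),
    q_add3 f (posP_nonneg _) (posP_nonneg _) (negP_nonneg _)] at key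
  unfold Fp
  linarith

lemma Fp_smul (r : ℝ) (x : LInf) : Fp f (r • x) = r * Fp f x := by
  rcases le_total 0 r with hr | hr
  · rw [Fp, posP_smul x hr, negP_smul x hr, q_smul f (posP_nonneg x) hr,
      q_smul f (negP_nonneg x) hr, Fp]
    ring
  · have h1 : r • x = (-r) • (-x) := by rw [neg_smul, smul_neg, neg_neg]
    rw [Fp, h1, posP_smul (-x) (neg_nonneg.mpr hr), negP_smul (-x) (neg_nonneg.mpr hr),
      posP_neg, negP_neg, q_smul f (negP_nonneg x) (neg_nonneg.mpr hr),
      q_smul f (posP_nonneg x) (neg_nonneg.mpr hr), Fp]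
    ring

lemma Fp_bound (x : LInf) : |Fp f x| ≤ 2 * ‖f‖ * ‖x‖ := by
  have h1 : q f (posP x) ≤ ‖f‖ * ‖x‖ := by
    refine (q_le_norm f (posP_nonneg x)).trans ?_
    refine mul_le_mul_of_nonneg_left ?_ (norm_nonneg f)
    exact norm_le _ (norm_nonneg x) fun n => by
      rw [posP_apply, abs_of_nonneg (le_max_right _ _)]
      exact max_le ((le_abs_self _).trans (abs_apply_le x n)) (norm_nonneg x)
  have h2 : q f (negP x) ≤ ‖f‖ * ‖x‖ := by
    refine (q_le_norm f (negP_nonneg x)).trans ?_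
    refine mul_le_mul_of_nonneg_left ?_ (norm_nonneg f)
    exact norm_le _ (norm_nonneg x) fun n => by
      rw [negP_apply, abs_of_nonneg (le_max_right _ _)]
      exact max_le ((neg_le_abs _).trans (abs_apply_le x n)) (norm_nonneg x)
  have h3 := q_nonneg f (posP_nonneg x)
  have h4 := q_nonneg f (negP_nonneg x)
  rw [Fp, abs_sub_le_iff]
  constructor <;> linarith

def gp : LInf →L[ℝ] ℝ :=
  LinearMap.mkContinuous
    { toFun := Fp f
      map_add' := Fp_add f
      map_smul' := Fp_smul f } (2 * ‖f‖)
    (fun x => by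
      simp only [LinearMap.coe_mk, AddHom.coe_mk]
      exact (Fp_bound f x).trans (le_refl _))

lemma gp_apply (x : LInf) : gp f x = q f (posP x) - q f (negP x) := rfl

lemma posP_of_nonneg {x : LInf} (hx : ∀ n, 0 ≤ x n) : posP x = x :=
  lp.ext (funext fun n => max_eq_left (hx n))

lemma negP_of_nonneg {x : LInf} (hx : ∀ n, 0 ≤ x n) : negP x = 0 := by
  refine lp.ext (funext fun n => ?_)
  rw [negP_apply, lp.coeFn_zero, Pi.zero_apply, max_eq_right (neg_nonpos.mpr (hx n))]

lemma gp_of_nonneg {x : LInf} (hx : ∀ n, 0 ≤ x n) : gp f x = q f x := by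
  rw [gp_apply, posP_of_nonneg hx, negP_of_nonneg hx, q_zero f, sub_zero]

lemma gp_nonneg {x : LInf} (hx : ∀ n, 0 ≤ x n) : 0 ≤ gp f x := by
  rw [gp_of_nonneg f hx]; exact q_nonneg f hx

lemma f_le_gp {x : LInf} (hx : ∀ n, 0 ≤ x n) : f x ≤ gp f x := by
  rw [gp_of_nonneg f hx]; exact f_le_q f hx

end Aux

namespace Aux

variable {I : Set (Set ℕ)} (hI : IsIdealOmega I) (f : LInf →L[ℝ] ℝ)
  (hf3 : ∀ A ∈ I, f (indic A) = 0)

include hI hf3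

lemma f_small : ∀ (k : ℕ) (A : Set ℕ), A ∈ I → ∀ y : LInf, (∀ n, 0 ≤ y n) →
    (∀ n, y n ≤ indic A n) → |f y| ≤ ‖f‖ / 2 ^ k := by
  intro k
  induction k with
  | zero =>
    intro A hA y hy1 hy2
    simp only [pow_zero, div_one]
    calc |f y| ≤ ‖f‖ * ‖y‖ := f.le_opNorm y
      _ ≤ ‖f‖ * 1 := by
          refine mul_le_mul_of_nonneg_left ?_ (norm_nonneg f)
          refine norm_le y zero_le_one fun n => ?_
          rw [abs_of_nonneg (hy1 n)]
          exact (hy2 n).trans (indic_le_one A n)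
      _ = ‖f‖ := mul_one _
  | succ k ih =>
    intro A hA y hy1 hy2
    set A₁ : Set ℕ := {n | (1:ℝ)/2 ≤ y n} with hA₁def
    have hA₁A : A₁ ⊆ A := by
      intro n hn
      by_contra hcon
      have := (hn : (1:ℝ)/2 ≤ y n).trans (hy2 n)
      rw [indic_apply_not_mem hcon] at this
      linarith
    have hA₁ : A₁ ∈ I := hI.1 A A₁ hA hA₁A
    set y' : LInf := y - (1/2 : ℝ) • indic A₁ with hy'def
    have hy'app : ∀ n, y' n = y n - (1/2) * indic A₁ n := fun n => by
      rw [hy'def, lp.coeFn_sub, Pi.sub_apply, lp.coeFn_smul, Pi.smul_apply, smul_eq_mul]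
    have h2y'1 : ∀ n, 0 ≤ (2 : ℝ) • y' n := by
      intro n
      rw [smul_eq_mul, hy'app]
      by_cases hn : n ∈ A₁
      · rw [indic_apply_mem hn]
        have h5 : (1:ℝ)/2 ≤ y n := hn
        linarith
      · rw [indic_apply_not_mem hn]
        have := hy1 n
        linarith
    have h2y'2 : ∀ n, (2 : ℝ) • y' n ≤ indic A n := by
      intro n
      rw [smul_eq_mul, hy'app]
      by_cases hn : n ∈ A₁
      · rw [indic_apply_mem hn, indic_apply_mem (hA₁A hn)]
        have h5 := (hy2 n).trans_eq (indic_apply_mem (hA₁A hn))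
        linarith
      · rw [indic_apply_not_mem hn]
        have h1 : y n < 1/2 := lt_of_not_ge hn
        by_cases hnA : n ∈ A
        · rw [indic_apply_mem hnA]; linarith
        · rw [indic_apply_not_mem hnA]
          have := (hy2 n).trans_eq (indic_apply_not_mem hnA)
          linarith
    have h2y' : ∀ n, ((2:ℝ) • y') n = (2 : ℝ) • y' n := fun n => by
      rw [lp.coeFn_smul, Pi.smul_apply]
    have ihy := ih A hA ((2:ℝ) • y') (fun n => (h2y' n) ▸ h2y'1 n)
      (fun n => (h2y' n) ▸ h2y'2 n)
    have hfy : f y = (1/2) * f ((2:ℝ) • y') := by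
      rw [map_smul, smul_eq_mul, hy'def, map_sub, map_smul, hf3 A₁ hA₁, smul_eq_mul]
      ring
    rw [hfy, abs_mul]
    rw [abs_of_nonneg (by norm_num : (0:ℝ) ≤ 1/2)]
    calc (1/2) * |f ((2:ℝ) • y')| ≤ (1/2) * (‖f‖ / 2 ^ k) := by linarith
      _ = ‖f‖ / 2 ^ (k + 1) := by ring

lemma f_vanish {A : Set ℕ} (hA : A ∈ I) {y : LInf} (hy1 : ∀ n, 0 ≤ y n)
    (hy2 : ∀ n, y n ≤ indic A n) : f y = 0 := by
  have h : ∀ k : ℕ, |f y| ≤ ‖f‖ * (1 / 2) ^ k := by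
    intro k
    have := f_small hI f hf3 k A hA y hy1 hy2
    calc |f y| ≤ ‖f‖ / 2 ^ k := this
      _ = ‖f‖ * (1/2) ^ k := by rw [div_pow, one_pow, mul_one_div]
  have hlim : Tendsto (fun k : ℕ => ‖f‖ * (1/2 : ℝ) ^ k) atTop (𝓝 0) := by
    rw [show (0:ℝ) = ‖f‖ * 0 by ring]
    exact (tendsto_pow_atTop_nhds_zero_of_lt_one (by norm_num) (by norm_num)).const_mul _
  have h0 : |f y| ≤ 0 := ge_of_tendsto hlim (Filter.univ_mem' h)
  exact abs_eq_zero.mp (le_antisymm h0 (abs_nonneg _))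

lemma f_vanish_scaled {A : Set ℕ} (hA : A ∈ I) {c : ℝ} (hc : 0 < c) {y : LInf}
    (hy1 : ∀ n, 0 ≤ y n) (hy2 : ∀ n, y n ≤ c * indic A n) : f y = 0 := by
  have h1 : f (c⁻¹ • y) = 0 := by
    refine f_vanish hI f hf3 hA (fun n => ?_) (fun n => ?_)
    · rw [lp.coeFn_smul, Pi.smul_apply, smul_eq_mul]
      exact mul_nonneg (inv_nonneg.mpr hc.le) (hy1 n)
    · rw [lp.coeFn_smul, Pi.smul_apply, smul_eq_mul, inv_mul_le_iff₀ hc]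
      exact hy2 n
  have : f y = c * f (c⁻¹ • y) := by
    rw [map_smul, smul_eq_mul, ← mul_assoc, mul_inv_cancel₀ hc.ne', one_mul]
  rw [this, h1, mul_zero]

lemma q_indic_zero {A : Set ℕ} (hA : A ∈ I) : q f (indic A) = 0 := by
  refine le_antisymm ?_ (q_nonneg f (indic_nonneg A))
  refine q_le f (indic_nonneg A) fun y hy => ?_
  rw [f_vanish hI f hf3 hA hy.1 hy.2]

lemma f_c0 {w : LInf} (hw : Tendsto (fun n => w n) atTop (𝓝 0)) : f w = 0 := by
  have key : ∀ ε : ℝ, 0 < ε → |f w| ≤ ‖f‖ * ε := by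
    intro ε hε
    obtain ⟨N, hN⟩ := (Metric.tendsto_atTop.mp hw ε hε)
    set c : ℝ := ‖w‖ + 1 with hcdef
    have hc : 0 < c := by positivity
    set B : Set ℕ := {n | n < N} with hBdef
    have hB : B ∈ I := hI.2.2.2 B (Set.finite_Iio N)
    set w₁ : LInf := mkB (fun n => if n < N then w n else 0) ‖w‖ (fun n => by
      by_cases h : n < N
      · simp only [if_pos h]; exact abs_apply_le w n
      · simp only [if_neg h, abs_zero]; exact norm_nonneg w) with hw₁def
    have hw₁app : ∀ n, w₁ n = if n < N then w n else 0 := fun n => rfl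
    have hf1 : f w₁ = 0 := by
      have hpos : f (posP w₁) = 0 := by
        refine f_vanish_scaled hI f hf3 hB hc (posP_nonneg w₁) fun n => ?_
        rw [posP_apply, hw₁app]
        by_cases h : n < N
        · rw [if_pos h, indic_apply_mem (by exact h)]
          refine max_le ?_ (by positivity)
          obtain ⟨ha1, ha2⟩ := abs_le.mp (abs_apply_le w n)
          rw [mul_one, hcdef]
          linarith
        · rw [if_neg h, indic_apply_not_mem (by exact h), mul_zero, max_self]
      have hneg : f (negP w₁) = 0 := by
        refine f_vanish_scaled hI f hf3 hB hc (negP_nonneg w₁) fun n => ?_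
        rw [negP_apply, hw₁app]
        by_cases h : n < N
        · rw [if_pos h, indic_apply_mem (by exact h)]
          refine max_le ?_ (by positivity)
          obtain ⟨ha1, ha2⟩ := abs_le.mp (abs_apply_le w n)
          rw [mul_one, hcdef]
          linarith
        · rw [if_neg h, indic_apply_not_mem (by exact h), mul_zero, neg_zero, max_self]
      have := posP_sub_negP w₁
      calc f w₁ = f (posP w₁ - negP w₁) := by rw [this]
        _ = f (posP w₁) - f (negP w₁) := map_sub f _ _
        _ = 0 := by rw [hpos, hneg, sub_zero]
    have hw2 : ‖w - w₁‖ ≤ ε := by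
      refine norm_le _ hε.le fun n => ?_
      rw [lp.coeFn_sub, Pi.sub_apply, hw₁app]
      by_cases h : n < N
      · rw [if_pos h, sub_self, abs_zero]; exact hε.le
      · rw [if_neg h, sub_zero]
        have h6 := hN n (le_of_not_gt h)
        rw [Real.dist_eq, sub_zero] at h6
        exact h6.le
    calc |f w| = |f (w - w₁) + f w₁| := by rw [map_sub]; ring_nf
      _ = |f (w - w₁)| := by rw [hf1, add_zero]
      _ ≤ ‖f‖ * ‖w - w₁‖ := f.le_opNorm _
      _ ≤ ‖f‖ * ε := mul_le_mul_of_nonneg_left hw2 (norm_nonneg f)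
  by_contra hcon
  have habs : 0 < |f w| := abs_pos.mpr hcon
  rcases eq_or_lt_of_le (norm_nonneg f) with hf0 | hf0
  · have := key 1 one_pos
    rw [← hf0, zero_mul] at this
    linarith
  · have h2 := key (|f w| / (2 * ‖f‖)) (by positivity)
    have h3 : ‖f‖ * (|f w| / (2 * ‖f‖)) = |f w| / 2 := by
      field_simp
    rw [h3] at h2
    linarith

lemma q_c0 {x : LInf} (hx : ∀ n, 0 ≤ x n) (hx0 : Tendsto (fun n => x n) atTop (𝓝 0)) :
    q f x = 0 := by
  refine le_antisymm ?_ (q_nonneg f hx)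
  refine q_le f hx fun y hy => ?_
  have : Tendsto (fun n => y n) atTop (𝓝 0) :=
    squeeze_zero hy.1 hy.2 hx0
  rw [f_c0 hI f hf3 this]

lemma gp_c0 {w : LInf} (hw : Tendsto (fun n => w n) atTop (𝓝 0)) : gp f w = 0 := by
  rw [gp_apply]
  have hp : Tendsto (fun n => posP w n) atTop (𝓝 0) := by
    have : Tendsto (fun n => max (w n) 0) atTop (𝓝 (max 0 0)) := hw.max tendsto_const_nhds
    rwa [max_self] at this
  have hn : Tendsto (fun n => negP w n) atTop (𝓝 0) := by
    have : Tendsto (fun n => max (-(w n)) 0) atTop (𝓝 (max (-0) 0)) :=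
      (hw.neg).max tendsto_const_nhds
    rwa [neg_zero, max_self] at this
  rw [q_c0 hI f hf3 (posP_nonneg w) hp, q_c0 hI f hf3 (negP_nonneg w) hn, sub_zero]

end Aux

namespace Aux

lemma eone_apply (n : ℕ) : eone n = 1 := indic_apply_mem (Set.mem_univ n)

lemma eone_nonneg (n : ℕ) : 0 ≤ eone n := by rw [eone_apply]; norm_num

lemma sli_norm_le {I : Set (Set ℕ)} (p : LInf →L[ℝ] ℝ) (hp : p ∈ SLI I) : ‖p‖ ≤ 1 := by
  refine p.opNorm_le_bound zero_le_one fun x => ?_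
  rw [one_mul]
  have he : p eone = 1 := hp.2.1 eone 1
    (tendsto_const_nhds.congr fun n => (eone_apply n).symm)
  have h1 : 0 ≤ p (‖x‖ • eone + x) := by
    refine hp.1 _ fun n => ?_
    rw [lp.coeFn_add, Pi.add_apply, lp.coeFn_smul, Pi.smul_apply, smul_eq_mul,
      eone_apply, mul_one]
    obtain ⟨a, b⟩ := abs_le.mp (abs_apply_le x n)
    linarith
  have h2 : 0 ≤ p (‖x‖ • eone - x) := by
    refine hp.1 _ fun n => ?_
    rw [lp.coeFn_sub, Pi.sub_apply, lp.coeFn_smul, Pi.smul_apply, smul_eq_mul,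
      eone_apply, mul_one]
    obtain ⟨a, b⟩ := abs_le.mp (abs_apply_le x n)
    linarith
  rw [map_add, map_smul, smul_eq_mul, he, mul_one] at h1
  rw [map_sub, map_smul, smul_eq_mul, he, mul_one] at h2
  rw [Real.norm_eq_abs, abs_le]
  constructor <;> linarith

end Aux

open Aux in
set_option maxHeartbeats 1000000 in
theorem stmt12 (I : Set (Set ℕ)) (hI : IsIdealOmega I) (f : LInf →L[ℝ] ℝ) :
    (∃ g ∈ SLI I, ∃ h ∈ SLI I, f = g - h) ↔
      (f eone = 0 ∧ ‖f‖ ≤ 2 ∧ ∀ A ∈ I, f (indic A) = 0) := by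
  constructor
  · rintro ⟨g, hg, h, hh, rfl⟩
    refine ⟨?_, ?_, ?_⟩
    · have hge : g eone = 1 := hg.2.1 eone 1
        (tendsto_const_nhds.congr fun n => (eone_apply n).symm)
      have hhe : h eone = 1 := hh.2.1 eone 1
        (tendsto_const_nhds.congr fun n => (eone_apply n).symm)
      rw [ContinuousLinearMap.sub_apply, hge, hhe, sub_self]
    · calc ‖g - h‖ ≤ ‖g‖ + ‖h‖ := norm_sub_le g h
        _ ≤ 1 + 1 := add_le_add (sli_norm_le g hg) (sli_norm_le h hh)
        _ = 2 := by norm_num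
    · intro A hA
      rw [ContinuousLinearMap.sub_apply, hg.2.2 A hA, hh.2.2 A hA, sub_self]
  · rintro ⟨hf1, hf2, hf3⟩
    set L : LInf →L[ℝ] ℝ := Lfun (idealUlt hI) with hLdef
    have hL := Lfun_mem hI
    set α : ℝ := q f eone with hαdef
    have hα0 : 0 ≤ α := q_nonneg f eone_nonneg
    have hα1 : α ≤ 1 := by
      refine q_le f eone_nonneg fun y hy => ?_
      have hn : ‖(2:ℝ) • y - eone‖ ≤ 1 := by
        refine norm_le _ zero_le_one fun n => ?_
        rw [lp.coeFn_sub, Pi.sub_apply, lp.coeFn_smul, Pi.smul_apply, smul_eq_mul,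
          eone_apply]
        have h1 := hy.1 n
        have h2 := (hy.2 n).trans_eq (eone_apply n)
        rw [abs_le]
        constructor <;> linarith
      have key : f ((2:ℝ) • y - eone) = 2 * f y := by
        rw [map_sub, map_smul, smul_eq_mul, hf1, sub_zero]
      have hb : |f ((2:ℝ) • y - eone)| ≤ 2 := by
        calc |f ((2:ℝ) • y - eone)| ≤ ‖f‖ * ‖(2:ℝ) • y - eone‖ := f.le_opNorm _
          _ ≤ 2 * 1 := mul_le_mul hf2 hn (norm_nonneg _) (by norm_num)
          _ = 2 := mul_one 2
      rw [key] at hb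
      obtain ⟨a, b⟩ := abs_le.mp hb
      linarith
    set g : LInf →L[ℝ] ℝ := gp f + (1 - α) • L with hgdef
    set h : LInf →L[ℝ] ℝ := (gp f - f) + (1 - α) • L with hhdef
    have hgpe : gp f eone = α := by rw [gp_of_nonneg f eone_nonneg]
    have hLlim : ∀ (x : LInf) (a : ℝ), Tendsto (fun n => x n) atTop (𝓝 a) → L x = a :=
      hL.2.1
    have hgp_lim : ∀ (x : LInf) (a : ℝ), Tendsto (fun n => x n) atTop (𝓝 a) →
        gp f x = a * α := by
      intro x a hxa
      have hdecomp : x = (x - a • eone) + a • eone := by abel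
      have hc0 : Tendsto (fun n => (x - a • eone) n) atTop (𝓝 0) := by
        have : Tendsto (fun n => x n - a) atTop (𝓝 (a - a)) :=
          hxa.sub tendsto_const_nhds
        rw [sub_self] at this
        refine this.congr fun n => ?_
        rw [lp.coeFn_sub, Pi.sub_apply, lp.coeFn_smul, Pi.smul_apply, smul_eq_mul,
          eone_apply, mul_one]
      calc gp f x = gp f ((x - a • eone) + a • eone) := by rw [← hdecomp]
        _ = gp f (x - a • eone) + a * gp f eone := by rw [map_add, map_smul, smul_eq_mul]
        _ = 0 + a * α := by rw [gp_c0 hI f hf3 hc0, hgpe]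
        _ = a * α := by ring
    have hf_lim : ∀ (x : LInf) (a : ℝ), Tendsto (fun n => x n) atTop (𝓝 a) → f x = 0 := by
      intro x a hxa
      have hc0 : Tendsto (fun n => (x - a • eone) n) atTop (𝓝 0) := by
        have : Tendsto (fun n => x n - a) atTop (𝓝 (a - a)) :=
          hxa.sub tendsto_const_nhds
        rw [sub_self] at this
        refine this.congr fun n => ?_
        rw [lp.coeFn_sub, Pi.sub_apply, lp.coeFn_smul, Pi.smul_apply, smul_eq_mul,
          eone_apply, mul_one]
      have : f (x - a • eone) = 0 := f_c0 hI f hf3 hc0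
      rw [map_sub, map_smul, smul_eq_mul, hf1, mul_zero, sub_zero] at this
      exact this
    refine ⟨g, ⟨?_, ?_, ?_⟩, h, ⟨?_, ?_, ?_⟩, ?_⟩
    · intro x hx
      rw [hgdef]
      simp only [ContinuousLinearMap.add_apply, ContinuousLinearMap.coe_smul',
        Pi.smul_apply, smul_eq_mul]
      exact add_nonneg (gp_nonneg f hx)
        (mul_nonneg (by linarith) (hL.1 x hx))
    · intro x a hxa
      rw [hgdef]
      simp only [ContinuousLinearMap.add_apply, ContinuousLinearMap.coe_smul',
        Pi.smul_apply, smul_eq_mul]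
      rw [hgp_lim x a hxa, hLlim x a hxa]
      ring
    · intro A hA
      rw [hgdef]
      simp only [ContinuousLinearMap.add_apply, ContinuousLinearMap.coe_smul',
        Pi.smul_apply, smul_eq_mul]
      have h1 : gp f (indic A) = 0 := by
        rw [gp_of_nonneg f (indic_nonneg A)]
        exact q_indic_zero hI f hf3 hA
      rw [h1, hL.2.2 A hA]
      ring
    · intro x hx
      rw [hhdef]
      simp only [ContinuousLinearMap.add_apply, ContinuousLinearMap.sub_apply,
        ContinuousLinearMap.coe_smul', Pi.smul_apply, smul_eq_mul]
      refine add_nonneg (by linarith [f_le_gp f hx])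
        (mul_nonneg (by linarith) (hL.1 x hx))
    · intro x a hxa
      rw [hhdef]
      simp only [ContinuousLinearMap.add_apply, ContinuousLinearMap.sub_apply,
        ContinuousLinearMap.coe_smul', Pi.smul_apply, smul_eq_mul]
      rw [hgp_lim x a hxa, hf_lim x a hxa, hLlim x a hxa]
      ring
    · intro A hA
      rw [hhdef]
      simp only [ContinuousLinearMap.add_apply, ContinuousLinearMap.sub_apply,
        ContinuousLinearMap.coe_smul', Pi.smul_apply, smul_eq_mul]
      have h1 : gp f (indic A) = 0 := by
        rw [gp_of_nonneg f (indic_nonneg A)]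
        exact q_indic_zero hI f hf3 hA
      rw [h1, hL.2.2 A hA, hf3 A hA]
      ring
    · rw [hgdef, hhdef]
      ext x
      simp only [ContinuousLinearMap.sub_apply, ContinuousLinearMap.add_apply,
        ContinuousLinearMap.coe_smul', Pi.smul_apply, smul_eq_mul]
      ring
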